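/- If (σ, τ) is a covering pair of the Bruhat order on S_m (so τ = tσ for a single transposition t), then for every cache size c ≤ m the number of cache hits changes by at most one: |hits_c(τ) − hits_c(σ)| ≤ 1. -/

import Mathlib

/-- `x` is an adjacent transposition `(i, i+1)` in the symmetric group on `Fin m`. -/
def IsAdjSwap {m : ℕ} (x : Equiv.Perm (Fin m)) : Prop :=
  ∃ i j : Fin m, (j : ℕ) = (i : ℕ) + 1 ∧ x = Equiv.swap i j

/-- `len σ` is the minimal number of adjacent transpositions whose product is `σ`
(the Coxeter length of `σ` in `S_m`). -/
noncomputable def len {m : ℕ} (σ : Equiv.Perm (Fin m)) : ℕ :=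
  sInf {n | ∃ l : List (Equiv.Perm (Fin m)),
    (∀ x ∈ l, IsAdjSwap x) ∧ l.prod = σ ∧ l.length = n}

/-- `l` is a reduced word for `w`: a product of `len w` adjacent transpositions equal to `w`. -/
def IsReducedWord {m : ℕ} (l : List (Equiv.Perm (Fin m))) (w : Equiv.Perm (Fin m)) : Prop :=
  (∀ x ∈ l, IsAdjSwap x) ∧ l.prod = w ∧ l.length = len w

/-- The Bruhat order on `S_m`: `u ≤ w` iff some reduced word for `w` contains a subword
that is a reduced word for `u`. -/
def BruhatLE {m : ℕ} (u w : Equiv.Perm (Fin m)) : Prop :=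
  ∃ lw, IsReducedWord lw w ∧ ∃ lu, lu.Sublist lw ∧ IsReducedWord lu u

/-- Strict Bruhat order. -/
def BruhatLT {m : ℕ} (u w : Equiv.Perm (Fin m)) : Prop :=
  BruhatLE u w ∧ u ≠ w

/-- `τ` covers `σ` in the Bruhat order: `σ < τ` with no element strictly in between. -/
def BruhatCov {m : ℕ} (σ τ : Equiv.Perm (Fin m)) : Prop :=
  BruhatLT σ τ ∧ ¬ ∃ u, BruhatLT σ u ∧ BruhatLT u τ

/-- The reuse distance of the `i`-th access of the re-traversal `B = σ(A)` in the trace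
`T = A B`, where `A` accesses items `1, …, m` in order (here 0-indexed over `Fin m`):
`rd(σ, i) = 1 + (m − σ(i)) + #{j < i : σ(j) < σ(i)}` in 1-indexed terms. -/
def rd {m : ℕ} (σ : Equiv.Perm (Fin m)) (i : Fin m) : ℕ :=
  (m - (σ i : ℕ)) + (Finset.univ.filter (fun j : Fin m => j < i ∧ σ j < σ i)).card

/-- The number of cache hits of the re-traversal `σ` for a fully associative LRU cache
of size `c`: the `i`-th access of `B` is a hit iff `rd(σ, i) ≤ c`. -/
def hits {m : ℕ} (c : ℕ) (σ : Equiv.Perm (Fin m)) : ℕ :=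
  (Finset.univ.filter (fun i : Fin m => rd σ i ≤ c)).card

/-!
A Bruhat cover is a single step `τ = σ * swap p q` with `p < q`, `σ p < σ q`, and no position
strictly between `p` and `q` holding a value strictly between `σ p` and `σ q`. This goes through
the corner counts `#{j < i | k ≤ x j}` of the tableau criterion: a subword of a reduced word has
pointwise smaller corner counts, and pointwise smaller corner counts can be raised to larger
ones by single steps, each of which is again a Bruhat relation. A cover leaves no room for an
intermediate step, so it is one step.

For a step, `rd` is unchanged off `p` and `q`, while `rd σ p ≤ rd τ q` and `rd τ p ≤ rd σ q`.
Writing `[x, i]` for "`x` hits at `i`", the change of hits is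
`([τ, p] - [σ, q]) + ([τ, q] - [σ, p])`, a term in `{0, 1}` plus a term in `{-1, 0}`.
-/

open Equiv Finset

lemma sum_add_add_eq_sum_add_add {ι M : Type*} [Fintype ι] [DecidableEq ι] [AddCommMonoid M]
    {f g : ι → M} {p q : ι} (hpq : p ≠ q) (h : ∀ i, i ≠ p → i ≠ q → f i = g i) :
    ∑ i, f i + g p + g q = ∑ i, g i + f p + f q := by
  have hq : q ∈ univ.erase p := mem_erase.2 ⟨hpq.symm, mem_univ q⟩
  rw [← add_sum_erase _ f (mem_univ p), ← add_sum_erase _ f hq, ← add_sum_erase _ g (mem_univ p),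
    ← add_sum_erase _ g hq, sum_congr rfl fun i hi =>
      h i (mem_erase.1 (mem_erase.1 hi).2).1 (mem_erase.1 hi).1]
  abel

lemma abs_card_filter_le_sub_card_filter_le_le_one {ι : Type*} [Fintype ι] [DecidableEq ι]
    {f g : ι → ℕ} {p q : ι} (hpq : p ≠ q) (heq : ∀ i, i ≠ p → i ≠ q → g i = f i)
    (hp : f p ≤ g q) (hq : g p ≤ f q) (c : ℕ) :
    |(#{i | g i ≤ c} : ℤ) - #{i | f i ≤ c}| ≤ 1 := by
  have key := sum_add_add_eq_sum_add_add (M := ℤ) (f := fun i => if g i ≤ c then 1 else 0)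
    (g := fun i => if f i ≤ c then 1 else 0) hpq fun i hip hiq => by rw [heq i hip hiq]
  simp only [natCast_card_filter]
  rw [abs_le]
  constructor <;> split_ifs at key <;> omega

section

variable {m : ℕ}

def invCount (w : Perm (Fin m)) : ℕ :=
  #{z : Fin m × Fin m | z.1 < z.2 ∧ w z.2 < w z.1}

lemma invCount_one : invCount (1 : Perm (Fin m)) = 0 := by
  simp only [invCount, card_eq_zero, filter_eq_empty_iff]
  exact fun z _ h => lt_asymm h.1 h.2

lemma swap_lt_swap_of_val_eq_succ {c c' i j : Fin m} (hc : (c' : ℕ) = c + 1) (hij : i < j)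
    (hne : ¬(i = c ∧ j = c')) : swap c c' i < swap c c' j := by
  simp only [swap_apply_def, Fin.lt_def, Fin.ext_iff] at hij hne ⊢
  split_ifs <;> omega

lemma invCount_mul_adjSwap_add_one {w : Perm (Fin m)} {c c' : Fin m} (hc : (c' : ℕ) = c + 1)
    (hd : w c' < w c) : invCount (w * swap c c') + 1 = invCount w := by
  have hcc' : c < c' := Fin.lt_def.2 (by omega)
  have hmem : (c, c') ∈ ({z : Fin m × Fin m | z.1 < z.2 ∧ w z.2 < w z.1} : Finset _) := by
    simp [hcc', hd]
  rw [invCount, invCount, ← card_erase_add_one hmem, Nat.add_right_cancel_iff]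
  -- the adjacent swap permutes the inversions of `w` other than `(c, c')`
  refine card_bij' (fun z _ => (swap c c' z.1, swap c c' z.2))
    (fun z _ => (swap c c' z.1, swap c c' z.2)) ?_ ?_ (by simp) (by simp)
  · intro z hz
    simp only [mem_filter, mem_univ, true_and] at hz
    simp only [Perm.mul_apply] at hz
    have hne : ¬(z.1 = c ∧ z.2 = c') := by
      obtain ⟨i, j⟩ := z
      rintro ⟨rfl, rfl⟩
      simp only [swap_apply_left, swap_apply_right] at hz
      exact lt_asymm hz.2 hd
    simp only [mem_erase, mem_filter, mem_univ, true_and, ne_eq, Prod.mk.injEq,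
      swap_apply_eq_iff, swap_apply_left, swap_apply_right]
    refine ⟨?_, swap_lt_swap_of_val_eq_succ hc hz.1 hne, hz.2⟩
    obtain ⟨i, j⟩ := z
    rintro ⟨rfl, rfl⟩
    exact lt_asymm hz.1 hcc'
  · intro z hz
    simp only [mem_erase, mem_filter, mem_univ, true_and, ne_eq, Prod.ext_iff] at hz
    simp only [mem_filter, mem_univ, true_and]
    simp only [Perm.mul_apply, swap_apply_self]
    exact ⟨swap_lt_swap_of_val_eq_succ hc hz.2.1 hz.1, hz.2.2⟩

lemma invCount_mul_adjSwap_of_lt {w : Perm (Fin m)} {c c' : Fin m} (hc : (c' : ℕ) = c + 1)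
    (ha : w c < w c') : invCount (w * swap c c') = invCount w + 1 := by
  have hd : (w * swap c c') c' < (w * swap c c') c := by simpa using ha
  simpa [mul_assoc] using (invCount_mul_adjSwap_add_one hc hd).symm

lemma invCount_mul_swap_of_lt {w : Perm (Fin m)} {p q : Fin m} (hpq : p < q) (ha : w p < w q)
    (hR : ∀ r, p < r → r < q → ¬(w p < w r ∧ w r < w q)) :
    invCount (w * swap p q) = invCount w + 1 := by
  induction hn : (q : ℕ) using Nat.strong_induction_on generalizing w q with
  | _ n ih =>
  subst hn
  by_cases hadj : (q : ℕ) = p + 1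
  · exact invCount_mul_adjSwap_of_lt hadj ha
  have hpq' : (p : ℕ) < q := hpq
  -- conjugate `swap p r` by the adjacent transposition `swap r q`, where `r = q - 1`
  set r : Fin m := ⟨q - 1, by omega⟩
  have hpr : p < r := Fin.lt_def.2 (by simp [r]; omega)
  have hrq : r < q := Fin.lt_def.2 (by simp [r]; omega)
  have hqr : (q : ℕ) = r + 1 := by simp [r]; omega
  have hconj : swap p q = swap r q * swap p r * swap r q := by
    rw [swap_mul_swap_mul_swap hpr.ne (hpr.trans hrq).ne, swap_comm]
  set w₁ := w * swap r q
  have hw₁ : ∀ j, j ≠ r → j ≠ q → w₁ j = w j := fun j h₁ h₂ => by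
    simp [w₁, swap_apply_of_ne_of_ne h₁ h₂]
  have hw₁p : w₁ p = w p := hw₁ p hpr.ne (hpr.trans hrq).ne
  have hw₁r : w₁ r = w q := by simp [w₁]
  have step₂ : invCount (w₁ * swap p r) = invCount w₁ + 1 := by
    refine ih r (by omega) hpr (by rwa [hw₁p, hw₁r]) (fun j hpj hjr => ?_) rfl
    rw [hw₁ j hjr.ne (hjr.trans hrq).ne, hw₁p, hw₁r]
    exact hR j hpj (hjr.trans hrq)
  set w₂ := w₁ * swap p r
  have hw₂r : w₂ r = w p := by simp [w₂, hw₁p]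
  have hw₂q : w₂ q = w r := by
    simp [w₂, w₁, swap_apply_of_ne_of_ne (hpr.trans hrq).ne' hrq.ne']
  have hprod : w * swap p q = w₂ * swap r q := by simp only [w₂, w₁, hconj, mul_assoc]
  rw [hprod]
  have hwr : w r < w p ∨ w q < w r := by
    have h₁ : w r ≠ w p := fun h => hpr.ne' (w.injective h)
    have h₂ : w r ≠ w q := fun h => hrq.ne (w.injective h)
    have := hR r hpr hrq
    rcases lt_or_gt_of_ne h₁ with h | h
    · exact Or.inl h
    · exact Or.inr (lt_of_le_of_ne (not_lt.1 fun h' => this ⟨h, h'⟩) h₂.symm)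
  rcases hwr with hwr | hwr
  · have step₁ : invCount w₁ = invCount w + 1 := invCount_mul_adjSwap_of_lt hqr (hwr.trans ha)
    have step₃ : invCount (w₂ * swap r q) + 1 = invCount w₂ :=
      invCount_mul_adjSwap_add_one hqr (by rwa [hw₂r, hw₂q])
    omega
  · have step₁ : invCount w₁ + 1 = invCount w := invCount_mul_adjSwap_add_one hqr hwr
    have step₃ : invCount (w₂ * swap r q) = invCount w₂ + 1 :=
      invCount_mul_adjSwap_of_lt hqr (by rw [hw₂r, hw₂q]; exact ha.trans hwr)
    omega

lemma exists_adjDescent_of_ne_one {w : Perm (Fin m)} (hw : w ≠ 1) :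
    ∃ c c' : Fin m, (c' : ℕ) = c + 1 ∧ w c' < w c := by
  by_contra! hasc
  apply hw
  cases m with
  | zero => exact Subsingleton.elim _ _
  | succ n =>
    have hmono : StrictMono w := Fin.strictMono_iff_lt_succ.2 fun i =>
      lt_of_le_of_ne (hasc _ _ (by simp)) (w.injective.ne Fin.castSucc_lt_succ.ne)
    have := Subsingleton.elim (hmono.orderIsoOfSurjective w w.surjective) (OrderIso.refl _)
    exact Equiv.ext fun i => congrArg (· i) this

lemma invCount_mul_le_of_isAdjSwap {w x : Perm (Fin m)} (hx : IsAdjSwap x) :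
    invCount (w * x) ≤ invCount w + 1 := by
  obtain ⟨c, c', hc, rfl⟩ := hx
  rcases lt_or_gt_of_ne (w.injective.ne (Fin.ne_of_val_ne (by omega) : c ≠ c')) with h | h
  · exact (invCount_mul_adjSwap_of_lt hc h).le
  · have := invCount_mul_adjSwap_add_one hc h
    omega

lemma invCount_prod_le_length {l : List (Perm (Fin m))} (hl : ∀ x ∈ l, IsAdjSwap x) :
    invCount l.prod ≤ l.length := by
  induction l using List.reverseRecOn with
  | nil => simp [invCount_one]
  | append_singleton l x ih =>
    have h₁ := invCount_mul_le_of_isAdjSwap (w := l.prod) (hl x (by simp))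
    have h₂ := ih fun y hy => hl y (by simp [hy])
    simp only [List.prod_append, List.prod_singleton, List.length_append, List.length_singleton]
    omega

lemma exists_adjSwap_word_length_eq_invCount (w : Perm (Fin m)) :
    ∃ l : List (Perm (Fin m)), (∀ x ∈ l, IsAdjSwap x) ∧ l.prod = w ∧ l.length = invCount w := by
  induction hn : invCount w using Nat.strong_induction_on generalizing w with
  | _ n ih =>
  subst hn
  by_cases hw : w = 1
  · exact ⟨[], by simp, by simp [hw], by simp [hw, invCount_one]⟩
  obtain ⟨c, c', hc, hd⟩ := exists_adjDescent_of_ne_one hw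
  have hstep := invCount_mul_adjSwap_add_one hc hd
  obtain ⟨l, hl, hprod, hlen⟩ := ih _ (by omega) (w * swap c c') rfl
  refine ⟨l ++ [swap c c'], fun x hx => ?_, by simp [hprod], by simp [hlen]; omega⟩
  rcases List.mem_append.1 hx with hx | hx
  · exact hl x hx
  · exact List.mem_singleton.1 hx ▸ ⟨c, c', hc, rfl⟩

lemma len_eq_invCount (w : Perm (Fin m)) : len w = invCount w := by
  obtain ⟨l, hl, hprod, hlen⟩ := exists_adjSwap_word_length_eq_invCount w
  refine le_antisymm (Nat.sInf_le ⟨l, hl, hprod, hlen⟩) (le_csInf ⟨_, l, hl, hprod, hlen⟩ ?_)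
  rintro n ⟨l', hl', rfl, rfl⟩
  exact invCount_prod_le_length hl'

lemma isReducedWord_iff {l : List (Perm (Fin m))} {w : Perm (Fin m)} :
    IsReducedWord l w ↔ (∀ x ∈ l, IsAdjSwap x) ∧ l.prod = w ∧ l.length = invCount w := by
  rw [IsReducedWord, len_eq_invCount]

lemma exists_isReducedWord (w : Perm (Fin m)) : ∃ l, IsReducedWord l w := by
  simpa only [isReducedWord_iff] using exists_adjSwap_word_length_eq_invCount w

lemma exists_prod_eq_mul_swap_of_lt {l : List (Perm (Fin m))} (hl : ∀ x ∈ l, IsAdjSwap x)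
    {p q : Fin m} (hpq : p < q) (hd : l.prod q < l.prod p) :
    ∃ l₁ x l₂, l = l₁ ++ x :: l₂ ∧ (l₁ ++ l₂).prod = l.prod * swap p q := by
  induction l with
  | nil => exact absurd hd (not_lt.2 hpq.le)
  | cons s t ih =>
    obtain ⟨c, c', hc, rfl⟩ := hl s List.mem_cons_self
    rcases lt_or_gt_of_ne (t.prod.injective.ne hpq.ne) with h | h
    · -- the first letter is the one that reverses the pair `t.prod p < t.prod q`
      obtain ⟨hcp, hcq⟩ : t.prod p = c ∧ t.prod q = c' := by
        by_contra hne
        exact (swap_lt_swap_of_val_eq_succ hc h hne).not_gt (by simpa using hd)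
      refine ⟨[], swap c c', t, rfl, ?_⟩
      rw [List.prod_cons, ← hcp, ← hcq, swap_apply_apply]
      simp [mul_assoc]
    · obtain ⟨l₁, x, l₂, rfl, hprod⟩ := ih (fun y hy => hl y (List.mem_cons_of_mem _ hy)) h
      exact ⟨swap c c' :: l₁, x, l₂, rfl, by simp [hprod, mul_assoc]⟩

def BruhatStep (u w : Perm (Fin m)) : Prop :=
  ∃ p q : Fin m, p < q ∧ u p < u q ∧ (∀ r, p < r → r < q → ¬(u p < u r ∧ u r < u q)) ∧
    w = u * swap p q

lemma BruhatStep.ne {u w : Perm (Fin m)} (h : BruhatStep u w) : u ≠ w := by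
  obtain ⟨p, q, hpq, -, -, rfl⟩ := h
  simpa using hpq.ne

lemma BruhatStep.invCount_eq {u w : Perm (Fin m)} (h : BruhatStep u w) :
    invCount w = invCount u + 1 := by
  obtain ⟨p, q, hpq, ha, hR, rfl⟩ := h
  exact invCount_mul_swap_of_lt hpq ha hR

lemma exists_sublist_isReducedWord_of_reflTransGen {u w : Perm (Fin m)}
    (h : Relation.ReflTransGen BruhatStep u w) {lw : List (Perm (Fin m))}
    (hlw : IsReducedWord lw w) : ∃ lu, lu.Sublist lw ∧ IsReducedWord lu u := by
  induction h generalizing lw with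
  | refl => exact ⟨lw, List.Sublist.refl lw, hlw⟩
  | @tail b c _ hbc ih =>
    have hlen := hbc.invCount_eq
    obtain ⟨p, q, hpq, ha, -, rfl⟩ := hbc
    rw [isReducedWord_iff] at hlw
    obtain ⟨hadj, hprod, hlw⟩ := hlw
    obtain ⟨l₁, x, l₂, rfl, hprod'⟩ :=
      exists_prod_eq_mul_swap_of_lt hadj hpq (by simpa [hprod] using ha)
    have hsub : (l₁ ++ l₂).Sublist (l₁ ++ x :: l₂) :=
      (List.sublist_cons_self x l₂).append_left l₁
    obtain ⟨lu, hlu, hred⟩ := ih <| isReducedWord_iff.2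
      ⟨fun y hy => hadj y (hsub.subset hy), by simp [hprod', hprod, mul_assoc],
        by simp at hlw ⊢; omega⟩
    exact ⟨lu, hlu.trans hsub, hred⟩

lemma bruhatLE_of_reflTransGen {u w : Perm (Fin m)}
    (h : Relation.ReflTransGen BruhatStep u w) : BruhatLE u w := by
  obtain ⟨lw, hlw⟩ := exists_isReducedWord w
  exact ⟨lw, hlw, exists_sublist_isReducedWord_of_reflTransGen h hlw⟩

def cornerCount (x : Perm (Fin m)) (i k : ℕ) : ℕ :=
  #{j : Fin m | (j : ℕ) < i ∧ k ≤ x j}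

lemma cornerCount_eq_add (x : Perm (Fin m)) {a i : ℕ} (h : a ≤ i) (k : ℕ) :
    cornerCount x i k = cornerCount x a k + #{j : Fin m | a ≤ j ∧ (j : ℕ) < i ∧ k ≤ x j} := by
  rw [cornerCount, cornerCount, ← card_union_of_disjoint]
  · congr 1
    ext j
    simp only [mem_filter, mem_univ, true_and, mem_union]
    omega
  · exact disjoint_filter.2 fun j _ h₁ h₂ => by omega

lemma cornerCount_succ (x : Perm (Fin m)) (j : Fin m) (k : ℕ) :
    cornerCount x (j + 1) k = cornerCount x j k + if k ≤ x j then 1 else 0 := by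
  have hrow : ({j' : Fin m | (j : ℕ) ≤ j' ∧ (j' : ℕ) < j + 1 ∧ k ≤ x j'} : Finset _) =
      ({j} : Finset (Fin m)).filter fun j' => k ≤ x j' := by
    ext j'
    simp only [mem_filter, mem_univ, true_and, mem_singleton, Fin.ext_iff]
    constructor
    · rintro ⟨h₁, h₂, h₃⟩
      obtain rfl : j' = j := Fin.ext (by omega)
      exact ⟨rfl, h₃⟩
    · rintro ⟨h, h'⟩
      exact ⟨h.ge, by omega, h'⟩
  rw [cornerCount_eq_add x (Nat.le_add_right j 1), hrow, filter_singleton]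
  split_ifs <;> rfl

lemma cornerCount_add_le_of_imp {x : Perm (Fin m)} {a i k K : ℕ} (ha : a ≤ i)
    (himp : ∀ j : Fin m, a ≤ j → (j : ℕ) < i → K ≤ x j → k ≤ x j) :
    cornerCount x i K + cornerCount x a k ≤ cornerCount x i k + cornerCount x a K := by
  rw [cornerCount_eq_add x ha K, cornerCount_eq_add x ha k]
  have := card_le_card (s := {j : Fin m | a ≤ j ∧ (j : ℕ) < i ∧ K ≤ x j})
    (t := {j : Fin m | a ≤ j ∧ (j : ℕ) < i ∧ k ≤ x j}) fun j => by
      simp only [mem_filter, mem_univ, true_and]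
      exact fun ⟨h₁, h₂, h₃⟩ => ⟨h₁, h₂, himp j h₁ h₂ h₃⟩
  omega

lemma cornerCount_eq_of_forall_lt {u w : Perm (Fin m)} {p : Fin m}
    (h : ∀ j, j < p → u j = w j) (k : ℕ) : cornerCount u p k = cornerCount w p k := by
  unfold cornerCount
  congr 1
  ext j
  simp only [mem_filter, mem_univ, true_and]
  exact and_congr_right fun hj => by rw [h j hj]

lemma cornerCount_mul_swap (x : Perm (Fin m)) {p q : Fin m} (hpq : p < q) (i k : ℕ) :
    cornerCount (x * swap p q) i k + (if p < i ∧ i ≤ q ∧ k ≤ x p then 1 else 0) =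
      cornerCount x i k + (if p < i ∧ i ≤ q ∧ k ≤ x q then 1 else 0) := by
  have key := sum_add_add_eq_sum_add_add
    (f := fun j : Fin m => if (j : ℕ) < i ∧ k ≤ (x * swap p q) j then 1 else 0)
    (g := fun j : Fin m => if (j : ℕ) < i ∧ k ≤ x j then 1 else 0) hpq.ne
    fun j hjp hjq => by rw [Perm.mul_apply, swap_apply_of_ne_of_ne hjp hjq]
  have hxp : (x * swap p q) p = x q := by simp
  have hxq : (x * swap p q) q = x p := by simp
  rw [hxp, hxq] at key
  simp only [cornerCount, card_filter]
  have : (p : ℕ) < q := hpq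
  split_ifs at key ⊢ <;> omega

lemma cornerCount_le_mul_swap (x : Perm (Fin m)) {p q : Fin m} (hpq : p < q)
    (ha : x p < x q) (i k : ℕ) : cornerCount x i k ≤ cornerCount (x * swap p q) i k := by
  have key := cornerCount_mul_swap x hpq i k
  have : (x p : ℕ) < x q := ha
  split_ifs at key <;> omega

lemma cornerCount_mul_adjSwap_le {u w : Perm (Fin m)} {c c' : Fin m} (hc : (c' : ℕ) = c + 1)
    (hu : u c < u c') (hw : w c < w c') (hdom : ∀ i k, cornerCount u i k ≤ cornerCount w i k)
    (i k : ℕ) : cornerCount (u * swap c c') i k ≤ cornerCount (w * swap c c') i k := by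
  have hcc' : c < c' := Fin.lt_def.2 (by omega)
  have hu' : (u c : ℕ) < u c' := hu
  have hw' : (w c : ℕ) < w c' := hw
  have keyu := cornerCount_mul_swap u hcc' i k
  have keyw := cornerCount_mul_swap w hcc' i k
  have h := hdom i k
  -- the only critical case: row `c + 1`, a threshold `k` that moves `u` but not `w`
  by_cases hcrit : i = c + 1 ∧ (u c : ℕ) < k ∧ k ≤ u c' ∧ ¬((w c : ℕ) < k ∧ k ≤ w c')
  · obtain ⟨rfl, hk₁, hk₂, hk₃⟩ := hcrit
    have hstrict : cornerCount u (c + 1) k < cornerCount w (c + 1) k := by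
      rcases not_and_or.1 hk₃ with hlo | hhi
      · have hsu := cornerCount_succ u c k
        have hsw := cornerCount_succ w c k
        have h₀ := hdom c k
        rw [if_neg (by omega)] at hsu
        rw [if_pos (by omega)] at hsw
        omega
      · have hsu := cornerCount_succ u c' k
        have hsw := cornerCount_succ w c' k
        have h₀ := hdom (c' + 1) k
        rw [hc, if_pos hk₂] at hsu
        rw [hc, if_neg hhi] at hsw
        rw [hc] at h₀
        omega
    split_ifs at keyu keyw <;> omega
  · split_ifs at keyu keyw <;> omega

lemma length_eq_invCount_and_lt_of_append_adjSwap {l : List (Perm (Fin m))} {c c' : Fin m}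
    (hl : ∀ x ∈ l, IsAdjSwap x) (hc : (c' : ℕ) = c + 1)
    (hred : (l ++ [swap c c']).length = invCount (l ++ [swap c c']).prod) :
    l.length = invCount l.prod ∧ l.prod c < l.prod c' := by
  simp only [List.length_append, List.length_singleton, List.prod_append,
    List.prod_singleton] at hred
  have h₁ := invCount_mul_le_of_isAdjSwap (w := l.prod) ⟨c, c', hc, rfl⟩
  have h₂ := invCount_prod_le_length hl
  refine ⟨by omega, ?_⟩
  rcases lt_or_gt_of_ne (l.prod.injective.ne (Fin.ne_of_val_ne (by omega) : c ≠ c')) with h | h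
  · exact h
  · have := invCount_mul_adjSwap_add_one hc h
    omega

lemma cornerCount_le_of_sublist {lu lw : List (Perm (Fin m))} (hlw : ∀ x ∈ lw, IsAdjSwap x)
    (hsub : lu.Sublist lw) (hredw : lw.length = invCount lw.prod)
    (hredu : lu.length = invCount lu.prod) (i k : ℕ) :
    cornerCount lu.prod i k ≤ cornerCount lw.prod i k := by
  induction lw using List.reverseRecOn generalizing lu i k with
  | nil => rw [List.sublist_nil.1 hsub]
  | append_singleton L s ih =>
    obtain ⟨c, c', hc, rfl⟩ := hlw s (by simp)
    have hL : ∀ x ∈ L, IsAdjSwap x := fun x hx => hlw x (by simp [hx])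
    obtain ⟨hredL, hasc⟩ := length_eq_invCount_and_lt_of_append_adjSwap hL hc hredw
    obtain ⟨l₁, l₂, rfl, hsub₁, hsub₂⟩ := List.sublist_append_iff.1 hsub
    rcases List.sublist_singleton.1 hsub₂ with rfl | rfl
    · rw [List.append_nil] at hredu ⊢
      rw [List.prod_append, List.prod_singleton]
      exact (ih hL hsub₁ hredL hredu i k).trans
        (cornerCount_le_mul_swap _ (Fin.lt_def.2 (by omega)) hasc i k)
    · have hl₁ : ∀ x ∈ l₁ ++ [swap c c'], IsAdjSwap x := fun x hx => by
        rcases List.mem_append.1 hx with hx | hx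
        · exact hL x (hsub₁.subset hx)
        · exact List.mem_singleton.1 hx ▸ ⟨c, c', hc, rfl⟩
      obtain ⟨hred₁, hasc₁⟩ := length_eq_invCount_and_lt_of_append_adjSwap
        (fun x hx => hl₁ x (by simp [hx])) hc hredu
      simp only [List.prod_append, List.prod_singleton]
      exact cornerCount_mul_adjSwap_le hc hasc₁ hasc (ih hL hsub₁ hredL hred₁) i k

lemma cornerCount_le_of_bruhatLE {u w : Perm (Fin m)} (h : BruhatLE u w) (i k : ℕ) :
    cornerCount u i k ≤ cornerCount w i k := by
  obtain ⟨lw, hlw, lu, hsub, hlu⟩ := h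
  rw [isReducedWord_iff] at hlw hlu
  obtain ⟨hadj, rfl, hlenw⟩ := hlw
  obtain ⟨-, rfl, hlenu⟩ := hlu
  exact cornerCount_le_of_sublist hadj hsub hlenw hlenu i k

section DominanceChain

variable {u w : Perm (Fin m)}

lemma le_of_cornerCount_le (hdom : ∀ i k, cornerCount u i k ≤ cornerCount w i k) {p : Fin m}
    (hpre : ∀ j, j < p → u j = w j) : u p ≤ w p := by
  have hu := cornerCount_succ u p (u p)
  have hw := cornerCount_succ w p (u p)
  have := hdom (p + 1) (u p)
  rw [cornerCount_eq_of_forall_lt hpre, if_pos le_rfl] at hu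
  by_contra h
  rw [if_neg (Fin.le_def.not.1 h)] at hw
  omega

lemma cornerCount_lt_mul_swap (x : Perm (Fin m)) {p q : Fin m} (hpq : p < q) (ha : x p < x q) :
    cornerCount x (p + 1) (x q) < cornerCount (x * swap p q) (p + 1) (x q) := by
  have key := cornerCount_mul_swap x hpq (p + 1) (x q)
  have : (x p : ℕ) < x q := ha
  have : (p : ℕ) < q := hpq
  split_ifs at key <;> omega

lemma cornerCount_mul_swap_le (hdom : ∀ i k, cornerCount u i k ≤ cornerCount w i k) {p q : Fin m}
    (hpre : ∀ j, j < p → u j = w j) (hpq : p < q) (huq : (u q : ℕ) ≤ w p)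
    (hmin : ∀ j, p < j → j < q → ¬((u p : ℕ) < u j ∧ (u j : ℕ) ≤ w p)) (i k : ℕ) :
    cornerCount (u * swap p q) i k ≤ cornerCount w i k := by
  have key := cornerCount_mul_swap u hpq i k
  have hik := hdom i k
  by_cases htr : (p : ℕ) < i ∧ i ≤ q ∧ (u p : ℕ) < k ∧ k ≤ u q
  swap
  · split_ifs at key <;> omega
  obtain ⟨hi₁, hi₂, hk₁, hk₂⟩ := htr
  have hpq' : (p : ℕ) < q := hpq
  -- compare the thresholds `k` and `K = w p + 1` on rows `p + 1, …, i - 1`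
  set K := (w p : ℕ) + 1
  have hcu : cornerCount u i k + cornerCount u (p + 1) K ≤
      cornerCount u i K + cornerCount u (p + 1) k := by
    refine cornerCount_add_le_of_imp (by omega) fun j hj₁ hj₂ hkj => ?_
    have := hmin j (Fin.lt_def.2 (by omega)) (Fin.lt_def.2 (by omega))
    omega
  have hcw : cornerCount w i K + cornerCount w (p + 1) k ≤
      cornerCount w i k + cornerCount w (p + 1) K :=
    cornerCount_add_le_of_imp (by omega) fun j _ _ hKj => by omega
  have hu₁ := cornerCount_succ u p k
  have hu₂ := cornerCount_succ u p K
  have hw₁ := cornerCount_succ w p k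
  have hw₂ := cornerCount_succ w p K
  rw [cornerCount_eq_of_forall_lt hpre] at hu₁ hu₂
  rw [if_neg (by omega)] at hu₁ hu₂ hw₂
  rw [if_pos (by omega)] at hw₁
  have hiK := hdom i K
  split_ifs at key <;> omega

lemma exists_swap_of_cornerCount_le (hdom : ∀ i k, cornerCount u i k ≤ cornerCount w i k)
    (hne : u ≠ w) :
    ∃ p q : Fin m, p < q ∧ u p < u q ∧ (∀ r, p < r → r < q → ¬(u p < u r ∧ u r < u q)) ∧
      ∀ i k, cornerCount (u * swap p q) i k ≤ cornerCount w i k := by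
  obtain ⟨p, hp⟩ := exists_minimal_of_wellFoundedLT (fun j => u j ≠ w j)
    (by by_contra! h; exact hne (Equiv.ext h))
  obtain ⟨hpne, hpre⟩ := minimal_iff_forall_lt.1 hp
  simp only [ne_eq, not_not] at hpre
  have hlt : u p < w p := lt_of_le_of_ne (le_of_cornerCount_le hdom hpre) hpne
  have hQ : p < u.symm (w p) ∧ u p < u (u.symm (w p)) ∧ u (u.symm (w p)) ≤ w p := by
    simp only [apply_symm_apply, le_refl, and_true, hlt]
    refine lt_of_le_of_ne (not_lt.1 fun h => ?_) fun h =>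
      hpne ((congrArg u h).trans (u.apply_symm_apply _))
    have := hpre h
    rw [apply_symm_apply] at this
    exact h.ne (w.injective this.symm)
  obtain ⟨q, hq⟩ := exists_minimal_of_wellFoundedLT
    (fun j => p < j ∧ u p < u j ∧ u j ≤ w p) ⟨_, hQ⟩
  obtain ⟨⟨hpq, ha, huq⟩, hqmin⟩ := minimal_iff_forall_lt.1 hq
  refine ⟨p, q, hpq, ha, fun r hpr hrq h => hqmin hrq ⟨hpr, h.1, h.2.le.trans huq⟩, ?_⟩
  refine cornerCount_mul_swap_le hdom hpre hpq huq fun j hpj hjq h => hqmin hjq ⟨hpj, ?_, ?_⟩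
  · exact Fin.lt_def.2 h.1
  · exact Fin.le_def.2 h.2

lemma reflTransGen_of_cornerCount_le (hdom : ∀ i k, cornerCount u i k ≤ cornerCount w i k) :
    Relation.ReflTransGen BruhatStep u w := by
  set S := range (m + 1) ×ˢ range (m + 1)
  induction hn : ∑ z ∈ S, (cornerCount w z.1 z.2 - cornerCount u z.1 z.2)
    using Nat.strong_induction_on generalizing u with
  | _ n ih =>
  by_cases heq : u = w
  · exact heq ▸ Relation.ReflTransGen.refl
  obtain ⟨p, q, hpq, ha, hR, hle⟩ := exists_swap_of_cornerCount_le hdom heq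
  refine Relation.ReflTransGen.head ⟨p, q, hpq, ha, hR, rfl⟩ (ih _ ?_ hle rfl)
  subst hn
  have hstrict := cornerCount_lt_mul_swap u hpq ha
  refine sum_lt_sum (fun z _ => ?_) ⟨(p + 1, u q), ?_, ?_⟩
  · have := cornerCount_le_mul_swap u hpq ha z.1 z.2
    omega
  · simp only [S, mem_product, mem_range]
    omega
  · have := hle (p + 1) (u q)
    dsimp only
    omega

end DominanceChain

lemma BruhatCov.bruhatStep {σ τ : Perm (Fin m)} (h : BruhatCov σ τ) : BruhatStep σ τ := by
  obtain ⟨⟨hle, hne⟩, hnomid⟩ := h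
  rcases Relation.ReflTransGen.cases_tail
    (reflTransGen_of_cornerCount_le (cornerCount_le_of_bruhatLE hle)) with rfl | ⟨u, hσu, huτ⟩
  · exact absurd rfl hne
  by_cases hu : σ = u
  · exact hu ▸ huτ
  exact absurd ⟨u, ⟨bruhatLE_of_reflTransGen hσu, hu⟩,
    bruhatLE_of_reflTransGen (.single huτ), huτ.ne⟩ hnomid

section ReuseDistance

variable {σ : Perm (Fin m)} {p q : Fin m}

lemma rd_mul_swap_of_ne (hpq : p < q) (ha : σ p < σ q)
    (hR : ∀ r, p < r → r < q → ¬(σ p < σ r ∧ σ r < σ q)) {i : Fin m} (hip : i ≠ p)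
    (hiq : i ≠ q) : rd (σ * swap p q) i = rd σ i := by
  have key := sum_add_add_eq_sum_add_add
    (f := fun j : Fin m => if j < i ∧ σ (swap p q j) < σ i then 1 else 0)
    (g := fun j : Fin m => if j < i ∧ σ j < σ i then 1 else 0) hpq.ne
    fun j hjp hjq => by rw [swap_apply_of_ne_of_ne hjp hjq]
  simp only [swap_apply_left, swap_apply_right] at key
  simp only [rd, card_filter, Perm.mul_apply, swap_apply_of_ne_of_ne hip hiq]
  -- only positions `i` strictly between `p` and `q` see the swap, and `σ i ∉ (σ p, σ q)` there
  have hi := hR i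
  have hσp : σ i ≠ σ p := σ.injective.ne hip
  have hσq : σ i ≠ σ q := σ.injective.ne hiq
  simp only [Fin.lt_def, ne_eq, Fin.ext_iff] at hpq ha hi hσp hσq hip hiq key ⊢
  split_ifs at key ⊢ <;> omega

lemma rd_le_rd_mul_swap (hpq : p < q) : rd σ p ≤ rd (σ * swap p q) q := by
  have hτq : (σ * swap p q) q = σ p := by simp
  rw [rd, rd, hτq, add_le_add_iff_left]
  refine card_le_card fun j hj => ?_
  simp only [mem_filter, mem_univ, true_and] at hj ⊢
  rw [Perm.mul_apply, swap_apply_of_ne_of_ne hj.1.ne (hj.1.trans hpq).ne]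
  exact ⟨hj.1.trans hpq, hj.2⟩

lemma rd_mul_swap_le_rd (hpq : p < q) : rd (σ * swap p q) p ≤ rd σ q := by
  have hτp : (σ * swap p q) p = σ q := by simp
  rw [rd, rd, hτp, add_le_add_iff_left]
  refine card_le_card fun j hj => ?_
  simp only [mem_filter, mem_univ, true_and] at hj ⊢
  rw [Perm.mul_apply, swap_apply_of_ne_of_ne hj.1.ne (hj.1.trans hpq).ne] at hj
  exact ⟨hj.1.trans hpq, hj.2⟩

end ReuseDistance

end

theorem hits_change_le_one_of_bruhatCov_general (m : ℕ) (σ τ : Equiv.Perm (Fin m))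
    (h : BruhatCov σ τ) (c : ℕ) :
    |(hits c τ : ℤ) - (hits c σ : ℤ)| ≤ 1 := by
  obtain ⟨p, q, hpq, ha, hR, rfl⟩ := h.bruhatStep
  exact abs_card_filter_le_sub_card_filter_le_le_one hpq.ne
    (fun i hip hiq => rd_mul_swap_of_ne hpq ha hR hip hiq) (rd_le_rd_mul_swap hpq)
    (rd_mul_swap_le_rd hpq) c

/-- If `(σ, τ)` is a covering pair of the Bruhat order on `S_m`, then for every cache size
`c ≤ m` the number of cache hits changes by at most one: `|hits_c(τ) − hits_c(σ)| ≤ 1`. -/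
theorem hits_change_le_one_of_bruhatCov (m : ℕ) (σ τ : Equiv.Perm (Fin m))
    (h : BruhatCov σ τ) (c : ℕ) (hc : c ≤ m) :
    |(hits c τ : ℤ) - (hits c σ : ℤ)| ≤ 1 :=
  hits_change_le_one_of_bruhatCov_general m σ τ h c
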